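/- arXiv:1605.06398 — 3 statements merged into one kernel-verified Lean document; each statement's English description precedes it below -/
import Mathlib

section
/- Let A be μ-strongly monotone with resolvent defined everywhere, B be monotone and L-Lipschitz on Euclidean space E, and z* the unique zero of A + B. Consider the forward-backward iteration z_t = (I + σA)^{-1}(z_{t-1} - σB(z_{t-1})) with step σ = μ/L². Then ‖z_t - z*‖² ≤ (L²/(μ² + L²))^t ‖z_0 - z*‖². -/
/-! With `J = (I + σA)⁻¹`, the forward step `I - σB` expands distances by at most
`√(1 + σ²L²)` (monotonicity of `B` kills the cross term) and the resolvent contracts them by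
`1 + σμ` (strong monotonicity of `A`). Since `z*` is a fixed point of `J ∘ (I - σB)`, each
iteration shrinks `‖z_t - z*‖²` by `(1 + σ²L²)/(1 + σμ)²`, which equals `L²/(μ² + L²)` for
`σ = μ/L²`. -/

open RealInnerProductSpace

section ForwardBackward

variable {E : Type*} [NormedAddCommGroup E] [InnerProductSpace ℝ E]

theorem mul_norm_le_norm_add_smul {d e : E} {μ σ : ℝ} (hσ : 0 ≤ σ)
    (he : μ * ‖d‖ ^ 2 ≤ ⟪e, d⟫) : (1 + σ * μ) * ‖d‖ ≤ ‖d + σ • e‖ := by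
  have hinner : (1 + σ * μ) * ‖d‖ ^ 2 ≤ ⟪d + σ • e, d⟫ := by
    rw [inner_add_left, real_inner_smul_left, real_inner_self_eq_norm_sq]
    nlinarith [mul_le_mul_of_nonneg_left he hσ]
  rcases (norm_nonneg d).eq_or_lt with hd | hd
  · rw [← hd, mul_zero]
    exact norm_nonneg _
  · have := hinner.trans (real_inner_le_norm _ _)
    rw [pow_two, ← mul_assoc] at this
    exact le_of_mul_le_mul_right this hd

theorem norm_sub_smul_sq_le {d e : E} {L σ : ℝ} (hσ : 0 ≤ σ) (he : 0 ≤ ⟪e, d⟫)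
    (hL : ‖e‖ ≤ L * ‖d‖) : ‖d - σ • e‖ ^ 2 ≤ (1 + σ ^ 2 * L ^ 2) * ‖d‖ ^ 2 := by
  have hsq : ‖e‖ ^ 2 ≤ (L * ‖d‖) ^ 2 := pow_le_pow_left₀ (norm_nonneg e) hL 2
  rw [norm_sub_sq_real, real_inner_smul_right, norm_smul, Real.norm_eq_abs, abs_of_nonneg hσ,
    real_inner_comm]
  nlinarith [mul_nonneg hσ he, mul_le_mul_of_nonneg_left hsq (sq_nonneg σ)]

theorem norm_sub_sq_le_of_forwardBackward {A B : E → E} {μ L σ : ℝ} (hσ : 0 ≤ σ) (hμ : 0 ≤ μ)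
    (hA : ∀ z z' : E, μ * ‖z - z'‖ ^ 2 ≤ ⟪A z - A z', z - z'⟫)
    (hBmono : ∀ z z' : E, 0 ≤ ⟪B z - B z', z - z'⟫)
    (hBlip : ∀ z z' : E, ‖B z - B z'‖ ≤ L * ‖z - z'‖) {x y x' y' : E}
    (hx : x' + σ • A x' = x - σ • B x) (hy : y' + σ • A y' = y - σ • B y) :
    ‖x' - y'‖ ^ 2 ≤ (1 + σ ^ 2 * L ^ 2) / (1 + σ * μ) ^ 2 * ‖x - y‖ ^ 2 := by
  have hdiff : (x' - y') + σ • (A x' - A y') = (x - y) - σ • (B x - B y) := by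
    rw [smul_sub, smul_sub]
    linear_combination (norm := abel) hx - hy
  have hres := mul_norm_le_norm_add_smul hσ (hA x' y')
  rw [hdiff] at hres
  have hres_sq := pow_le_pow_left₀ (by positivity) hres 2
  rw [div_mul_eq_mul_div, le_div_iff₀ (by positivity)]
  calc ‖x' - y'‖ ^ 2 * (1 + σ * μ) ^ 2 = ((1 + σ * μ) * ‖x' - y'‖) ^ 2 := by ring
    _ ≤ ‖(x - y) - σ • (B x - B y)‖ ^ 2 := hres_sq
    _ ≤ (1 + σ ^ 2 * L ^ 2) * ‖x - y‖ ^ 2 :=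
      norm_sub_smul_sq_le hσ (hBmono x y) (hBlip x y)

end ForwardBackward

theorem forwardBackward_rate_eq {μ L : ℝ} (hL : L ≠ 0) :
    (1 + (μ / L ^ 2) ^ 2 * L ^ 2) / (1 + μ / L ^ 2 * μ) ^ 2 = L ^ 2 / (μ ^ 2 + L ^ 2) := by
  have : μ ^ 2 + L ^ 2 ≠ 0 := by positivity
  field_simp
  ring

theorem stmt_3 {E : Type*} [NormedAddCommGroup E] [InnerProductSpace ℝ E]
    (A B J : E → E) (μ L σ : ℝ) (hμ : 0 < μ) (hL : 0 < L)
    (hσ : σ = μ / L ^ 2)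
    (hA : ∀ z z' : E, μ * ‖z - z'‖ ^ 2 ≤ ⟪A z - A z', z - z'⟫)
    (hBmono : ∀ z z' : E, 0 ≤ ⟪B z - B z', z - z'⟫)
    (hBlip : ∀ z z' : E, ‖B z - B z'‖ ≤ L * ‖z - z'‖)
    (hJ : ∀ z : E, J z + σ • A (J z) = z)
    (zstar : E) (hzstar : A zstar + B zstar = 0)
    (z : ℕ → E) (hiter : ∀ t : ℕ, z (t + 1) = J (z t - σ • B (z t))) :
    ∀ t : ℕ, ‖z t - zstar‖ ^ 2 ≤ (L ^ 2 / (μ ^ 2 + L ^ 2)) ^ t * ‖z 0 - zstar‖ ^ 2 := by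
  have hσ0 : 0 ≤ σ := hσ ▸ by positivity
  have hfix : zstar + σ • A zstar = zstar - σ • B zstar := by
    rw [eq_neg_of_add_eq_zero_left hzstar, smul_neg, sub_eq_add_neg]
  intro t
  refine le_geom (u := fun t => ‖z t - zstar‖ ^ 2) (by positivity) t fun k _ => ?_
  have hstep : z (k + 1) + σ • A (z (k + 1)) = z k - σ • B (z k) := by
    rw [hiter]
    exact hJ _
  refine (norm_sub_sq_le_of_forwardBackward hσ0 hμ.le hA hBmono hBlip hstep hfix).trans_eq ?_
  rw [hσ, forwardBackward_rate_eq hL.ne']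
end

section
/- Consider a nonnegative sequence satisfying E‖z_t - z*‖² ≤ (1 - η_t)E‖z_{t-1} - z*‖² + (8/(t+1+A)²)(1/μ²)·E‖C_t z*‖², with η_t = 2/(t+1+A) for a constant A ≥ 0. Then for all t ≥ 1, E‖z_t - z*‖² ≤ ((1+A)²/(t+A)²)‖z_0 - z*‖² + (8/(μ²(t+A))) sup_{1≤u≤t} E‖C_u z*‖². -/
/-!
Multiplying the recursion by the weight `(t + A) * (t + 1 + A)` makes it telescope: since
`1 - 2 / (t + 1 + A) = (t - 1 + A) / (t + 1 + A)`, the weighted error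
`(t + A) * (t + 1 + A) * a t` exceeds its predecessor by at most `8 / μ ^ 2 * c t`. Summing gives
`(t + A) * (t + 1 + A) * a t ≤ A * (1 + A) * a 0 + 8 / μ ^ 2 * t * sup c`, and dividing by the
weight yields the bound.
-/

open Finset

lemma mul_add_one_mul_le_of_le_one_sub_two_div {s K x y c : ℝ} (hs : 0 < s) (hK : 0 ≤ K)
    (hc : 0 ≤ c) (h : y ≤ (1 - 2 / (s + 1)) * x + K / (s + 1) ^ 2 * c) :
    s * (s + 1) * y ≤ (s - 1) * s * x + K * c := by
  have hs1 : 0 < s + 1 := by linarith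
  calc s * (s + 1) * y ≤ s * (s + 1) * ((1 - 2 / (s + 1)) * x + K / (s + 1) ^ 2 * c) :=
        mul_le_mul_of_nonneg_left h (by positivity)
    _ = (s - 1) * s * x + s / (s + 1) * (K * c) := by field_simp; ring
    _ ≤ (s - 1) * s * x + K * c := by
        have : s / (s + 1) ≤ 1 := (div_le_one hs1).2 (by linarith)
        have := mul_le_of_le_one_left (mul_nonneg hK hc) this
        linarith

lemma weighted_le_add_sum_Icc {a c : ℕ → ℝ} {A K : ℝ} (hA : 0 ≤ A) (hK : 0 ≤ K)
    (hc : ∀ t, 0 ≤ c t)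
    (hrec : ∀ t : ℕ, 1 ≤ t →
      a t ≤ (1 - 2 / ((t : ℝ) + 1 + A)) * a (t - 1) + K / ((t : ℝ) + 1 + A) ^ 2 * c t)
    (t : ℕ) :
    (t + A) * (t + 1 + A) * a t ≤ A * (1 + A) * a 0 + K * ∑ u ∈ Icc 1 t, c u := by
  induction t with
  | zero => simp
  | succ n ih =>
    have hrec' := hrec (n + 1) (by omega)
    push_cast at hrec'
    rw [show (n : ℝ) + 1 + 1 + A = n + 1 + A + 1 by ring] at hrec'
    have hstep := mul_add_one_mul_le_of_le_one_sub_two_div (by positivity) hK (hc (n + 1)) hrec'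
    rw [sum_Icc_succ_top (by omega), mul_add]
    push_cast
    linarith

lemma le_of_weighted_le {x A y y₀ K S : ℝ} (hx : 0 < x) (hA : 0 ≤ A) (hy₀ : 0 ≤ y₀)
    (hK : 0 ≤ K) (hS : 0 ≤ S)
    (h : (x + A) * (x + 1 + A) * y ≤ A * (1 + A) * y₀ + K * (x * S)) :
    y ≤ (1 + A) ^ 2 / (x + A) ^ 2 * y₀ + K / (x + A) * S := by
  have hxA : 0 < x + A := by positivity
  rw [← mul_le_mul_iff_of_pos_left (by positivity : 0 < (x + A) * (x + 1 + A))]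
  refine h.trans (sub_nonneg.1 ?_)
  have hgap : (x + A) * (x + 1 + A) * ((1 + A) ^ 2 / (x + A) ^ 2 * y₀ + K / (x + A) * S)
      - (A * (1 + A) * y₀ + K * (x * S))
      = (1 + A) * (x + 1 + 2 * A) / (x + A) * y₀ + (1 + A) * K * S := by
    field_simp
    ring
  rw [hgap]
  positivity

theorem stmt_10_general (a c : ℕ → ℝ) (A μ : ℝ) (hA : 0 ≤ A)
    (ha : ∀ t, 0 ≤ a t) (hc : ∀ t, 0 ≤ c t)
    (hrec : ∀ t : ℕ, 1 ≤ t →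
      a t ≤ (1 - 2 / ((t : ℝ) + 1 + A)) * a (t - 1)
            + 8 / (((t : ℝ) + 1 + A) ^ 2) * (1 / μ ^ 2) * c t) :
    ∀ t : ℕ, ∀ ht : 1 ≤ t,
      a t ≤ (1 + A) ^ 2 / (((t : ℝ) + A) ^ 2) * a 0
            + 8 / (μ ^ 2 * ((t : ℝ) + A)) *
                (Finset.Icc 1 t).sup' (Finset.nonempty_Icc.mpr ht) c := by
  intro t ht
  set S := (Icc 1 t).sup' (nonempty_Icc.mpr ht) c
  have hK : 0 ≤ 8 / μ ^ 2 := by positivity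
  have hS : 0 ≤ S := (hc 1).trans (le_sup' c (by simpa using ht))
  have hsum : ∑ u ∈ Icc 1 t, c u ≤ t * S := by
    simpa using sum_le_card_nsmul (Icc 1 t) c S fun u hu => le_sup' c hu
  have hweighted := weighted_le_add_sum_Icc hA hK hc
    (fun u hu => (hrec u hu).trans_eq (by ring)) t
  have hbound := le_of_weighted_le (x := t) (by positivity) hA (ha 0) hK hS
    (hweighted.trans (by gcongr))
  rwa [div_div] at hbound

theorem stmt_10 (a c : ℕ → ℝ) (A μ : ℝ) (hA : 0 ≤ A) (hμ : 0 < μ)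
    (ha : ∀ t, 0 ≤ a t) (hc : ∀ t, 0 ≤ c t)
    (hrec : ∀ t : ℕ, 1 ≤ t →
      a t ≤ (1 - 2 / ((t : ℝ) + 1 + A)) * a (t - 1)
            + 8 / (((t : ℝ) + 1 + A) ^ 2) * (1 / μ ^ 2) * c t) :
    ∀ t : ℕ, ∀ ht : 1 ≤ t,
      a t ≤ (1 + A) ^ 2 / (((t : ℝ) + A) ^ 2) * a 0
            + 8 / (μ ^ 2 * ((t : ℝ) + A)) *
                (Finset.Icc 1 t).sup' (Finset.nonempty_Icc.mpr ht) c :=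
  stmt_10_general a c A μ hA ha hc hrec
end

section
/- Let A be μ-strongly monotone with everywhere-defined resolvent, B = Σ_{i∈I} B_i monotone L-Lipschitz with L̄ = L̄(π) the variance constant, and z* the zero of A + B. One SVRG inner iteration z_t = (I+σA)^{-1}( z_{t-1} - σ[B(z̃) + (1/π_{i_t})(B_{i_t}(z_{t-1}) - B_{i_t}(z̃))]) with i_t ~ π independent satisfies E[‖z_t - z*‖² | F_{t-1}] ≤ ((1+σ²L²)/(1+σμ)²)‖z_{t-1} - z*‖² + (σ²L̄²/(1+σμ)²)‖z_{t-1} - z̃‖². -/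
/-!
The resolvent of a `μ`-strongly monotone operator is `1/(1+σμ)`-Lipschitz, so the expected
squared distance of the new iterate to `z* = J(z* - σ B z*)` is at most `1/(1+σμ)²` times the
expected squared distance of the forward-step points `z - σ gᵢ` to `z* - σ B z*`. The SVRG
estimator `gᵢ` is unbiased, so this splits into the squared bias `‖(z - σ B z) - (z* - σ B z*)‖²`,
bounded by `(1+σ²L²)‖z - z*‖²` via monotonicity and Lipschitz continuity of `B`, plus `σ²` times
the variance of `gᵢ`, which is at most its second moment about `B z̃`, i.e. `L̄²‖z - z̃‖²`.
-/

open RealInnerProductSpace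

section WeightedMean

variable {ι E : Type*} [NormedAddCommGroup E] [InnerProductSpace ℝ E]
  {s : Finset ι} {π : ι → ℝ} {X : ι → E} {m : E}

theorem sum_mul_norm_sub_sq_eq (hπ : ∑ i ∈ s, π i = 1) (hm : ∑ i ∈ s, π i • X i = m) (b : E) :
    ∑ i ∈ s, π i * ‖X i - b‖ ^ 2 = ‖m - b‖ ^ 2 + ∑ i ∈ s, π i * ‖X i - m‖ ^ 2 := by
  have hcentered : ∑ i ∈ s, π i • (X i - m) = 0 := by
    simp only [smul_sub, Finset.sum_sub_distrib, ← Finset.sum_smul, hπ, one_smul, hm, sub_self]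
  have hexpand : ∀ i, π i * ‖X i - b‖ ^ 2
      = π i * ‖X i - m‖ ^ 2 + 2 * ⟪π i • (X i - m), m - b⟫ + π i * ‖m - b‖ ^ 2 := by
    intro i
    rw [← sub_add_sub_cancel (X i) m b, norm_add_sq_real, real_inner_smul_left]
    ring
  simp only [hexpand, Finset.sum_add_distrib, ← Finset.mul_sum, ← sum_inner, hcentered,
    inner_zero_left, ← Finset.sum_mul, hπ]
  ring

theorem sum_mul_norm_sub_sq_le (hπ : ∑ i ∈ s, π i = 1) (hm : ∑ i ∈ s, π i • X i = m) (b : E) :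
    ∑ i ∈ s, π i * ‖X i - m‖ ^ 2 ≤ ∑ i ∈ s, π i * ‖X i - b‖ ^ 2 := by
  rw [sum_mul_norm_sub_sq_eq hπ hm b]
  exact le_add_of_nonneg_left (sq_nonneg _)

end WeightedMean

section Operators

variable {E : Type*} [NormedAddCommGroup E] [InnerProductSpace ℝ E]

theorem mul_norm_resolvent_sub_le {A J : E → E} {μ σ : ℝ} (hσ : 0 ≤ σ)
    (hA : ∀ z z' : E, μ * ‖z - z'‖ ^ 2 ≤ ⟪A z - A z', z - z'⟫)
    (hJ : ∀ z : E, J z + σ • A (J z) = z) (v w : E) :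
    (1 + σ * μ) * ‖J v - J w‖ ≤ ‖v - w‖ := by
  set d := J v - J w
  have hvw : v - w = d + σ • (A (J v) - A (J w)) := by
    conv_lhs => rw [← hJ v, ← hJ w]
    module
  have hinner : (1 + σ * μ) * ‖d‖ ^ 2 ≤ ⟪v - w, d⟫ := by
    rw [hvw, inner_add_left, real_inner_smul_left, real_inner_self_eq_norm_sq]
    nlinarith [mul_le_mul_of_nonneg_left (hA (J v) (J w)) hσ]
  rcases (norm_nonneg d).eq_or_lt with hd | hd
  · rw [← hd, mul_zero]
    exact norm_nonneg _
  · refine le_of_mul_le_mul_right ?_ hd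
    calc (1 + σ * μ) * ‖d‖ * ‖d‖ = (1 + σ * μ) * ‖d‖ ^ 2 := by ring
      _ ≤ ‖v - w‖ * ‖d‖ := hinner.trans (real_inner_le_norm _ _)

theorem norm_resolvent_sub_sq_le {A J : E → E} {μ σ : ℝ} (hμ : 0 ≤ μ) (hσ : 0 ≤ σ)
    (hA : ∀ z z' : E, μ * ‖z - z'‖ ^ 2 ≤ ⟪A z - A z', z - z'⟫)
    (hJ : ∀ z : E, J z + σ • A (J z) = z) (v w : E) :
    ‖J v - J w‖ ^ 2 ≤ ‖v - w‖ ^ 2 / (1 + σ * μ) ^ 2 := by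
  have hκ : 0 < 1 + σ * μ := by positivity
  rw [← div_pow]
  gcongr
  rw [le_div_iff₀ hκ, mul_comm]
  exact mul_norm_resolvent_sub_le hσ hA hJ v w

theorem norm_forward_step_sub_sq_le {B : E → E} {L σ : ℝ} {x y : E} (hσ : 0 ≤ σ)
    (hmono : 0 ≤ ⟪B x - B y, x - y⟫) (hlip : ‖B x - B y‖ ≤ L * ‖x - y‖) :
    ‖(x - σ • B x) - (y - σ • B y)‖ ^ 2 ≤ (1 + σ ^ 2 * L ^ 2) * ‖x - y‖ ^ 2 := by
  have hsq : ‖B x - B y‖ ^ 2 ≤ (L * ‖x - y‖) ^ 2 := by gcongr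
  have hstep : (x - σ • B x) - (y - σ • B y) = (x - y) - σ • (B x - B y) := by module
  rw [hstep, norm_sub_sq_real, real_inner_smul_right, norm_smul, Real.norm_eq_abs, abs_of_nonneg hσ,
    real_inner_comm]
  nlinarith [mul_nonneg hσ hmono, mul_le_mul_of_nonneg_left hsq (sq_nonneg σ)]

end Operators

section SVRG

variable {ι E : Type*} [Fintype ι] [NormedAddCommGroup E] [InnerProductSpace ℝ E]

/-- The SVRG estimate of `∑ j, B j z` from the snapshot `ztilde` when the index `i` is drawn with
probability `π i`. -/
noncomputable def svrgEstimator (B : ι → E → E) (π : ι → ℝ) (ztilde z : E) (i : ι) : E :=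
  (∑ j, B j ztilde) + (π i)⁻¹ • (B i z - B i ztilde)

variable {B : ι → E → E} {π : ι → ℝ}

theorem sum_smul_svrgEstimator (hπ0 : ∀ i, π i ≠ 0) (hπ : ∑ i, π i = 1) (ztilde z : E) :
    ∑ i, π i • svrgEstimator B π ztilde z i = ∑ i, B i z := by
  simp only [svrgEstimator, smul_add, smul_smul, mul_inv_cancel₀ (hπ0 _), one_smul,
    Finset.sum_add_distrib, ← Finset.sum_smul, hπ, Finset.sum_sub_distrib]
  abel

theorem sum_mul_norm_svrgEstimator_sub_sq_le (hπ0 : ∀ i, π i ≠ 0) (hπ : ∑ i, π i = 1)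
    (ztilde z : E) :
    ∑ i, π i * ‖svrgEstimator B π ztilde z i - ∑ j, B j z‖ ^ 2
      ≤ ∑ i, (π i)⁻¹ * ‖B i z - B i ztilde‖ ^ 2 := by
  refine (sum_mul_norm_sub_sq_le hπ (sum_smul_svrgEstimator hπ0 hπ ztilde z)
    (∑ j, B j ztilde)).trans_eq (Finset.sum_congr rfl fun i _ => ?_)
  rw [svrgEstimator, add_sub_cancel_left, norm_smul, mul_pow, Real.norm_eq_abs, sq_abs, ← mul_assoc,
    inv_pow, sq, mul_inv, ← mul_assoc, mul_inv_cancel₀ (hπ0 i), one_mul]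

end SVRG

theorem stmt_12 {E : Type*} [NormedAddCommGroup E] [InnerProductSpace ℝ E]
    {ι : Type*} [Fintype ι]
    (A : E → E) (B : ι → E → E) (J : E → E) (π : ι → ℝ)
    (μ σ L Lbar2 : ℝ) (hμ : 0 < μ) (hσ : 0 < σ)
    (hπpos : ∀ i, 0 < π i) (hπsum : ∑ i, π i = 1)
    (hA : ∀ z z' : E, μ * ‖z - z'‖ ^ 2 ≤ ⟪A z - A z', z - z'⟫)
    (hJ : ∀ z : E, J z + σ • A (J z) = z)
    (hBmono : ∀ z z' : E, 0 ≤ ⟪(∑ i, B i z) - ∑ i, B i z', z - z'⟫)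
    (hBlip : ∀ z z' : E, ‖(∑ i, B i z) - ∑ i, B i z'‖ ≤ L * ‖z - z'‖)
    (hLbar : ∀ z z' : E, ∑ i, (π i)⁻¹ * ‖B i z - B i z'‖ ^ 2 ≤ Lbar2 * ‖z - z'‖ ^ 2)
    (zstar : E) (hzstar : zstar = J (zstar - σ • ∑ i, B i zstar))
    (z ztilde : E) :
    ∑ i, π i *
        ‖J (z - σ • ((∑ j, B j ztilde) + (π i)⁻¹ • (B i z - B i ztilde))) - zstar‖ ^ 2
      ≤ (1 + σ ^ 2 * L ^ 2) / (1 + σ * μ) ^ 2 * ‖z - zstar‖ ^ 2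
        + σ ^ 2 * Lbar2 / (1 + σ * μ) ^ 2 * ‖z - ztilde‖ ^ 2 := by
  have hπ0 : ∀ i, π i ≠ 0 := fun i => (hπpos i).ne'
  set g := svrgEstimator B π ztilde z
  set w := zstar - σ • ∑ i, B i zstar
  have hres : ∀ v, ‖J v - zstar‖ ^ 2 ≤ ‖v - w‖ ^ 2 / (1 + σ * μ) ^ 2 := fun v => by
    simpa only [← hzstar] using norm_resolvent_sub_sq_le hμ.le hσ.le hA hJ v w
  have hunbiased : ∑ i, π i • g i = ∑ i, B i z := sum_smul_svrgEstimator hπ0 hπsum ztilde z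
  have hmean : ∑ i, π i • (z - σ • g i) = z - σ • ∑ i, B i z := by
    simp only [smul_sub, Finset.sum_sub_distrib, ← Finset.sum_smul, hπsum, one_smul, smul_comm _ σ,
      ← Finset.smul_sum, hunbiased]
  have hdev : ∀ i, π i * ‖(z - σ • g i) - (z - σ • ∑ j, B j z)‖ ^ 2
      = σ ^ 2 * (π i * ‖g i - ∑ j, B j z‖ ^ 2) := fun i => by
    rw [sub_sub_sub_cancel_left, ← smul_sub, norm_smul, norm_sub_rev, mul_pow, Real.norm_eq_abs,
      sq_abs]
    ring
  calc ∑ i, π i * ‖J (z - σ • g i) - zstar‖ ^ 2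
      ≤ ∑ i, π i * ‖(z - σ • g i) - w‖ ^ 2 / (1 + σ * μ) ^ 2 := by
        simp only [mul_div_assoc]
        gcongr with i
        · exact (hπpos i).le
        · exact hres _
    _ = (‖(z - σ • ∑ j, B j z) - w‖ ^ 2 + σ ^ 2 * ∑ i, π i * ‖g i - ∑ j, B j z‖ ^ 2)
          / (1 + σ * μ) ^ 2 := by
        rw [← Finset.sum_div, sum_mul_norm_sub_sq_eq hπsum hmean, Finset.mul_sum]
        simp only [hdev]
    _ ≤ ((1 + σ ^ 2 * L ^ 2) * ‖z - zstar‖ ^ 2 + σ ^ 2 * (Lbar2 * ‖z - ztilde‖ ^ 2))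
          / (1 + σ * μ) ^ 2 := by
        gcongr
        · exact norm_forward_step_sub_sq_le (B := fun x => ∑ i, B i x) hσ.le (hBmono z zstar) (hBlip z zstar)
        · exact (sum_mul_norm_svrgEstimator_sub_sq_le hπ0 hπsum ztilde z).trans (hLbar z ztilde)
    _ = _ := by ring
end
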